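/- arXiv:math/9612212 — 4 statements merged into one kernel-verified Lean document; each statement's English description precedes it below -/
import Mathlib

section
/- For every simple graph G on n vertices, the size of a maximum matching satisfies ν(G) ≥ min{δ(G), (n-1)/2}, where δ(G) is the minimum degree. -/
open SimpleGraph Finset

namespace MatchingAux

variable {V : Type*} {G : SimpleGraph V} {M : G.Subgraph}

open scoped Classical in
/-- The matched partner of a vertex. -/
noncomputable def partner (hM : M.IsMatching) (w : V) : V :=
  if h : w ∈ M.verts then (hM h).exists.choose else w

lemma partner_adj (hM : M.IsMatching) {w : V} (h : w ∈ M.verts) :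
    M.Adj w (partner hM w) := by
  rw [partner, dif_pos h]
  exact (hM h).exists.choose_spec

lemma adj_unique (hM : M.IsMatching) {p q r : V} (h1 : M.Adj p q) (h2 : M.Adj p r) : q = r :=
  (hM (M.edge_vert h1)).unique h1 h2

lemma partner_eq (hM : M.IsMatching) {w z : V} (hadj : M.Adj w z) : partner hM w = z :=
  adj_unique hM (partner_adj hM (M.edge_vert hadj)) hadj

/-- The matched edge of a vertex. -/
noncomputable def medge (hM : M.IsMatching) (w : V) : Sym2 V := s(w, partner hM w)

lemma mem_medge (hM : M.IsMatching) (w : V) : w ∈ medge hM w := Sym2.mem_mk_left _ _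

lemma medge_mem_edgeSet (hM : M.IsMatching) {w : V} (h : w ∈ M.verts) :
    medge hM w ∈ M.edgeSet := partner_adj hM h

lemma medge_eq (hM : M.IsMatching) {w z : V} (hadj : M.Adj w z) : medge hM w = s(w, z) := by
  rw [medge, partner_eq hM hadj]

lemma verts_ncard_le [Fintype V] [DecidableEq V] (hM : M.IsMatching) :
    M.verts.ncard ≤ 2 * M.edgeSet.ncard := by
  classical
  set s : Finset V := M.verts.toFinset with hs
  have h1 : s.card ≤ 2 * (s.image (medge hM)).card := by
    refine Finset.card_le_mul_card_image s 2 ?_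
    intro e he
    obtain ⟨w, hw, hwe⟩ := Finset.mem_image.mp he
    have hwv : w ∈ M.verts := by simpa [hs] using hw
    have heE : e ∈ M.edgeSet := hwe ▸ medge_mem_edgeSet hM hwv
    induction e with
    | _ x y =>
      have hsub : {a ∈ s | medge hM a = s(x, y)} ⊆ {x, y} := by
        intro z hz
        obtain ⟨_, hz2⟩ := Finset.mem_filter.mp hz
        have : z ∈ s(x, y) := hz2 ▸ mem_medge hM z
        simpa [Sym2.mem_iff] using this
      calc {a ∈ s | medge hM a = s(x,y)}.card ≤ ({x, y} : Finset V).card :=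
            Finset.card_le_card hsub
        _ ≤ 2 := (Finset.card_insert_le _ _).trans (by simp)
  have h2 : (s.image (medge hM)).card ≤ M.edgeSet.ncard := by
    rw [Set.ncard_eq_toFinset_card' M.edgeSet]
    refine Finset.card_le_card ?_
    intro e he
    obtain ⟨w, hw, hwe⟩ := Finset.mem_image.mp he
    have hwv : w ∈ M.verts := by simpa [hs] using hw
    simpa using hwe ▸ medge_mem_edgeSet hM hwv
  rw [Set.ncard_eq_toFinset_card' M.verts]
  exact h1.trans (by omega)

lemma pigeon [Fintype V] [DecidableEq V] (hM : M.IsMatching) {A B : Finset V}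
    (hA : ↑A ⊆ M.verts) (hB : ↑B ⊆ M.verts)
    (hcard : 2 * M.edgeSet.ncard < A.card + B.card) :
    ∃ x y, M.Adj x y ∧ x ∈ A ∧ y ∈ B := by
  classical
  set s : Finset (V ⊕ V) := A.disjSum B with hs
  set t : Finset (Sym2 V) := M.edgeSet.toFinset with ht
  set f : V ⊕ V → Sym2 V := Sum.elim (medge hM) (medge hM) with hf
  have hmaps : ∀ a ∈ s, f a ∈ t := by
    rintro (a | a) ha
    · exact Set.mem_toFinset.mpr (medge_mem_edgeSet hM (hA (Finset.inl_mem_disjSum.mp ha)))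
    · exact Set.mem_toFinset.mpr (medge_mem_edgeSet hM (hB (Finset.inr_mem_disjSum.mp ha)))
  have htcard : t.card = M.edgeSet.ncard := (Set.ncard_eq_toFinset_card' _).symm
  have hlt : t.card * 2 < s.card := by
    rw [htcard, hs, Finset.card_disjSum]; omega
  obtain ⟨e, heT, hefib⟩ := Finset.exists_lt_card_fiber_of_mul_lt_card_of_maps_to hmaps hlt
  have heE : e ∈ M.edgeSet := Set.mem_toFinset.mp heT
  induction e with
  | _ x y =>
    have hxy : M.Adj x y := heE
    have key : ∀ z ∈ {a ∈ s | f a = s(x, y)},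
        (z = Sum.inl x ∧ x ∈ A) ∨ (z = Sum.inl y ∧ y ∈ A) ∨
        (z = Sum.inr x ∧ x ∈ B) ∨ (z = Sum.inr y ∧ y ∈ B) := by
      rintro (w | w) hz <;> obtain ⟨hz1, hz2⟩ := Finset.mem_filter.mp hz
      · have hwA : w ∈ A := Finset.inl_mem_disjSum.mp hz1
        have : w ∈ s(x, y) := hz2 ▸ mem_medge hM w
        rcases Sym2.mem_iff.mp this with rfl | rfl
        · exact Or.inl ⟨rfl, hwA⟩
        · exact Or.inr (Or.inl ⟨rfl, hwA⟩)
      · have hwB : w ∈ B := Finset.inr_mem_disjSum.mp hz1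
        have : w ∈ s(x, y) := hz2 ▸ mem_medge hM w
        rcases Sym2.mem_iff.mp this with rfl | rfl
        · exact Or.inr (Or.inr (Or.inl ⟨rfl, hwB⟩))
        · exact Or.inr (Or.inr (Or.inr ⟨rfl, hwB⟩))
    by_contra hcon
    push_neg at hcon
    have h1 : x ∈ A → y ∉ B := fun h1 h2 => hcon x y hxy h1 h2
    have h2 : y ∈ A → x ∉ B := fun h1 h2 => hcon y x hxy.symm h1 h2
    have hsub : ∃ p q : V ⊕ V, {a ∈ s | f a = s(x, y)} ⊆ {p, q} := by
      by_cases hxA : x ∈ A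
      · by_cases hyA : y ∈ A
        · refine ⟨Sum.inl x, Sum.inl y, fun z hz => ?_⟩
          rcases key z hz with ⟨rfl, _⟩ | ⟨rfl, _⟩ | ⟨rfl, h⟩ | ⟨rfl, h⟩ <;>
            simp_all
        · refine ⟨Sum.inl x, Sum.inr x, fun z hz => ?_⟩
          rcases key z hz with ⟨rfl, _⟩ | ⟨rfl, h⟩ | ⟨rfl, _⟩ | ⟨rfl, h⟩ <;>
            simp_all
      · by_cases hyA : y ∈ A
        · refine ⟨Sum.inl y, Sum.inr y, fun z hz => ?_⟩
          rcases key z hz with ⟨rfl, h⟩ | ⟨rfl, _⟩ | ⟨rfl, h⟩ | ⟨rfl, _⟩ <;>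
            simp_all
        · refine ⟨Sum.inr x, Sum.inr y, fun z hz => ?_⟩
          rcases key z hz with ⟨rfl, h⟩ | ⟨rfl, h⟩ | ⟨rfl, _⟩ | ⟨rfl, _⟩ <;>
            simp_all
    obtain ⟨p, q, hpq⟩ := hsub
    have h3 : ({p, q} : Finset (V ⊕ V)).card ≤ 2 :=
      (Finset.card_insert_le _ _).trans (by simp)
    have := Finset.card_le_card hpq
    omega

lemma extend [Fintype V] (hM : M.IsMatching) {x y : V} (hadj : G.Adj x y)
    (hx : x ∉ M.verts) (hy : y ∉ M.verts) :
    ∃ M' : G.Subgraph, M'.IsMatching ∧ M'.edgeSet.ncard = M.edgeSet.ncard + 1 := by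
  refine ⟨M ⊔ G.subgraphOfAdj hadj, ?_, ?_⟩
  · refine hM.sup (Subgraph.IsMatching.subgraphOfAdj hadj) ?_
    rw [hM.support_eq_verts, support_subgraphOfAdj]
    rw [Set.disjoint_right]
    rintro a (rfl | rfl) <;> assumption
  · rw [Subgraph.edgeSet_sup, edgeSet_subgraphOfAdj,
      Set.union_singleton]
    have hnot : s(x, y) ∉ M.edgeSet := fun h => hx (M.edge_vert h)
    rw [Set.ncard_insert_of_notMem hnot (Set.toFinite _)]

lemma induce_isMatching (hM : M.IsMatching) {a b : V} (hab : M.Adj a b) :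
    (M.induce (M.verts \ {a, b})).IsMatching := by
  intro w hw
  obtain ⟨hwv, hwab⟩ := hw
  simp only [Set.mem_insert_iff, Set.mem_singleton_iff, not_or] at hwab
  set z := partner hM w with hz
  have hadj : M.Adj w z := partner_adj hM hwv
  have hzv : z ∈ M.verts := M.edge_vert hadj.symm
  have hza : z ≠ a := by
    rintro rfl
    exact hwab.2 (adj_unique hM hadj.symm hab)
  have hzb : z ≠ b := by
    rintro rfl
    exact hwab.1 (adj_unique hM hadj.symm hab.symm)
  refine ⟨z, ⟨⟨hwv, by simp [hwab]⟩, ⟨hzv, by simp [hza, hzb]⟩, hadj⟩, ?_⟩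
  rintro c ⟨_, _, hc⟩
  exact adj_unique hM hc hadj

lemma induce_edgeSet (hM : M.IsMatching) {a b : V} (hab : M.Adj a b) :
    (M.induce (M.verts \ {a, b})).edgeSet = M.edgeSet \ {s(a, b)} := by
  ext e
  induction e with
  | _ p q =>
    simp only [Subgraph.mem_edgeSet, Subgraph.induce_adj,
      Set.mem_diff, Set.mem_singleton_iff, Set.mem_insert_iff, not_or]
    constructor
    · rintro ⟨⟨hp, hpa, hpb⟩, ⟨hq, hqa, hqb⟩, hpq⟩
      refine ⟨hpq, fun heq => ?_⟩
      have : a ∈ s(p, q) := heq ▸ Sym2.mem_mk_left a b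
      rcases Sym2.mem_iff.mp this with rfl | rfl
      · exact hpa rfl
      · exact hqa rfl
    · rintro ⟨hpq, hne⟩
      have hp : p ∈ M.verts := M.edge_vert hpq
      have hq : q ∈ M.verts := M.edge_vert hpq.symm
      have hpa : p ≠ a := by
        rintro rfl
        exact hne (by rw [adj_unique hM hpq hab])
      have hpb : p ≠ b := by
        rintro rfl
        rw [adj_unique hM hpq hab.symm] at hne
        exact hne (Sym2.eq_swap)
      have hqa : q ≠ a := by
        rintro rfl
        rw [adj_unique hM hpq.symm hab] at hne
        exact hne (Sym2.eq_swap) |>.elim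
      have hqb : q ≠ b := by
        rintro rfl
        exact hne (by rw [adj_unique hM hpq.symm hab.symm])
      exact ⟨⟨hp, hpa, hpb⟩, ⟨hq, hqa, hqb⟩, hpq⟩


lemma augment [Fintype V] [DecidableEq V] (hM : M.IsMatching) {u v x y : V}
    (huv : u ≠ v) (hu : u ∉ M.verts) (hv : v ∉ M.verts) (hxy : M.Adj x y)
    (hux : G.Adj u x) (hvy : G.Adj v y) :
    ∃ M' : G.Subgraph, M'.IsMatching ∧ M'.edgeSet.ncard = M.edgeSet.ncard + 1 := by
  have hxv : x ∈ M.verts := M.edge_vert hxy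
  have hyv : y ∈ M.verts := M.edge_vert hxy.symm
  have hne_ux : u ≠ x := fun h => hu (h ▸ hxv)
  have hne_uy : u ≠ y := fun h => hu (h ▸ hyv)
  have hne_vx : v ≠ x := fun h => hv (h ▸ hxv)
  have hne_vy : v ≠ y := fun h => hv (h ▸ hyv)
  have hne_xy : x ≠ y := (M.adj_sub hxy).ne
  set Mind := M.induce (M.verts \ {x, y}) with hMind_def
  have hMind : Mind.IsMatching := induce_isMatching hM hxy
  set M1 := Mind ⊔ G.subgraphOfAdj hux with hM1_def
  have hd1 : Disjoint Mind.support (G.subgraphOfAdj hux).support := by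
    rw [hMind.support_eq_verts, support_subgraphOfAdj]
    rw [Set.disjoint_right]
    rintro a (rfl | rfl)
    · exact fun h => hu h.1
    · exact fun h => h.2 (by simp)
  have hM1m : M1.IsMatching := hMind.sup (Subgraph.IsMatching.subgraphOfAdj hux) hd1
  have hd2 : Disjoint M1.support (G.subgraphOfAdj hvy).support := by
    rw [hM1m.support_eq_verts, support_subgraphOfAdj]
    rw [Set.disjoint_right]
    rintro a (rfl | rfl)
    · rintro (h | h)
      · exact hv h.1
      · rcases h with rfl | rfl
        · exact huv rfl
        · exact hne_vx rfl
    · rintro (h | h)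
      · exact h.2 (by simp)
      · rcases h with rfl | rfl
        · exact hne_uy rfl
        · exact hne_xy rfl
  refine ⟨M1 ⊔ G.subgraphOfAdj hvy, hM1m.sup (Subgraph.IsMatching.subgraphOfAdj hvy) hd2, ?_⟩
  have hE : (M1 ⊔ G.subgraphOfAdj hvy).edgeSet =
      ((M.edgeSet \ {s(x, y)}) ∪ {s(u, x)}) ∪ {s(v, y)} := by
    rw [Subgraph.edgeSet_sup, Subgraph.edgeSet_sup, edgeSet_subgraphOfAdj,
      edgeSet_subgraphOfAdj, hMind_def, induce_edgeSet hM hxy]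
  rw [hE]
  set E0 := M.edgeSet \ {s(x, y)} with hE0
  have h1 : s(u, x) ∉ E0 := fun h => hu (M.edge_vert h.1)
  have h2 : s(v, y) ∉ insert s(u, x) E0 := by
    rintro (h | h)
    · rw [Sym2.eq_iff] at h
      rcases h with ⟨rfl, rfl⟩ | ⟨rfl, rfl⟩
      · exact huv rfl
      · exact hne_vx rfl
    · exact hv (M.edge_vert h.1)
  have hfin : E0.Finite := (Set.toFinite M.edgeSet).diff
  rw [Set.union_singleton, Set.union_singleton,
    Set.ncard_insert_of_notMem h2 (hfin.insert _),
    Set.ncard_insert_of_notMem h1 hfin, hE0,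
    Set.ncard_diff_singleton_of_mem (Subgraph.mem_edgeSet.mpr hxy)]
  have hpos : 0 < M.edgeSet.ncard := (Set.ncard_pos (Set.toFinite _)).mpr ⟨s(x, y), Subgraph.mem_edgeSet.mpr hxy⟩
  omega

end MatchingAux

open MatchingAux in
theorem matching_number_ge_min_minDegree {V : Type*} [Fintype V] [DecidableEq V]
    (G : SimpleGraph V) [DecidableRel G.Adj] :
    ∃ M : G.Subgraph, M.IsMatching ∧
      min G.minDegree ((Fintype.card V - 1) / 2) ≤ M.edgeSet.ncard := by
  classical
  set S : Set ℕ := {k | ∃ M : G.Subgraph, M.IsMatching ∧ M.edgeSet.ncard = k} with hS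
  have h0 : (0 : ℕ) ∈ S := ⟨⊥, fun v hv => absurd hv (by simp [Subgraph.verts_bot] at *), by simp⟩
  have hbdd : BddAbove S := by
    refine ⟨Fintype.card (Sym2 V), ?_⟩
    rintro k ⟨M, _, rfl⟩
    calc M.edgeSet.ncard ≤ (Set.univ : Set (Sym2 V)).ncard :=
          Set.ncard_le_ncard (Set.subset_univ _) (Set.toFinite _)
      _ = Fintype.card (Sym2 V) := by rw [Set.ncard_univ, Nat.card_eq_fintype_card]
  obtain ⟨M, hM, hMk⟩ := Nat.sSup_mem ⟨0, h0⟩ hbdd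
  set k := sSup S with hk
  have hmax : ∀ M' : G.Subgraph, M'.IsMatching → M'.edgeSet.ncard ≤ k :=
    fun M' hM' => le_csSup hbdd ⟨M', hM', rfl⟩
  refine ⟨M, hM, ?_⟩
  by_contra hcon
  push_neg at hcon
  rw [hMk] at hcon
  have hδ : k < G.minDegree := lt_of_lt_of_le hcon (min_le_left _ _)
  have hn2 : 2 * k + 2 ≤ Fintype.card V := by
    have := lt_of_lt_of_le hcon (min_le_right _ _)
    have h2 : k + 1 ≤ (Fintype.card V - 1) / 2 := this
    have := (Nat.le_div_iff_mul_le (by norm_num)).mp h2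
    omega
  -- find two unmatched vertices
  have hverts : M.verts.ncard ≤ 2 * k := hMk ▸ verts_ncard_le hM
  have hcompl : 1 < M.vertsᶜ.ncard := by
    have := Set.ncard_add_ncard_compl M.verts (Set.toFinite _) (Set.toFinite _)
    rw [Nat.card_eq_fintype_card] at this
    omega
  obtain ⟨u, v, hu, hv, huv⟩ := (Set.one_lt_ncard_iff (Set.toFinite _)).mp hcompl
  rw [Set.mem_compl_iff] at hu hv
  -- all neighbors of u and v are matched
  have hnbr : ∀ w, w ∉ M.verts → ∀ z, G.Adj w z → z ∈ M.verts := by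
    intro w hw z hwz
    by_contra hz
    obtain ⟨M', hM', hM'c⟩ := extend hM hwz hw hz
    have := hmax M' hM'
    omega
  have hA : ↑(G.neighborFinset u) ⊆ M.verts := by
    intro z hz
    exact hnbr u hu z ((G.mem_neighborFinset u z).mp (by simpa using hz))
  have hB : ↑(G.neighborFinset v) ⊆ M.verts := by
    intro z hz
    exact hnbr v hv z ((G.mem_neighborFinset v z).mp (by simpa using hz))
  have hAc : k + 1 ≤ (G.neighborFinset u).card := by
    rw [G.card_neighborFinset_eq_degree]
    exact le_trans hδ (G.minDegree_le_degree u)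
  have hBc : k + 1 ≤ (G.neighborFinset v).card := by
    rw [G.card_neighborFinset_eq_degree]
    exact le_trans hδ (G.minDegree_le_degree v)
  obtain ⟨x, y, hxy, hxA, hyB⟩ := pigeon hM hA hB (by rw [hMk]; omega)
  obtain ⟨M', hM', hM'c⟩ := augment hM huv hu hv hxy
    ((G.mem_neighborFinset u x).mp hxA) ((G.mem_neighborFinset v y).mp hyB)
  have := hmax M' hM'
  omega
end

section
/- For every simple graph G on n vertices with at least one vertex, the size of a maximum matching satisfies ν(G) ≥ δ(G)·n / (2(δ(G) + Δ(G))), where δ(G) and Δ(G) are the minimum and maximum degree of G (assuming δ(G) + Δ(G) > 0). -/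
/-!
Take a maximum matching `M` with `k` edges. It covers `2k` vertices, and the uncovered vertices
form an independent set `I`, since an edge between two of them could be added to `M`. Every edge
at a vertex of `I` goes to the complement of `I`, so counting these edges from both sides gives
`δ (n - 2k) ≤ δ |I| ≤ Δ · 2k`, that is `δ n ≤ 2k (δ + Δ)`.
-/

open Finset

namespace SimpleGraph

variable {V : Type*} {G : SimpleGraph V}

namespace Subgraph

structure IsMaximumMatching (M : G.Subgraph) : Prop where
  isMatching : M.IsMatching
  ncard_edgeSet_le : ∀ M' : G.Subgraph, M'.IsMatching → M'.edgeSet.ncard ≤ M.edgeSet.ncard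

lemma IsMatching.ncard_verts [Finite V] {M : G.Subgraph} (h : M.IsMatching) :
    M.verts.ncard = 2 * M.edgeSet.ncard := by
  classical
  have := Fintype.ofFinite V
  have hcoe : M.coe.edgeSet.ncard = #M.coe.edgeFinset := by
    rw [← coe_edgeFinset, Set.ncard_coe_finset]
  rw [← M.image_coe_edgeSet_coe,
    Set.ncard_image_of_injective _ (Sym2.map.injective Subtype.val_injective), hcoe,
    ← M.coe.sum_degrees_eq_twice_card_edges]
  calc M.verts.ncard = ∑ _ : M.verts, 1 := by simp [Set.ncard_eq_toFinset_card']
    _ = _ := Finset.sum_congr rfl fun v _ => by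
      rw [coe_degree]; convert ((isMatching_iff_forall_degree).1 h v v.2).symm

/-- An edge with both ends unmatched could be added to the matching. -/
lemma IsMaximumMatching.isIndepSet_compl_verts [Finite V] {M : G.Subgraph}
    (hM : M.IsMaximumMatching) : G.IsIndepSet M.vertsᶜ := by
  intro u hu w hw _ huw
  have hdisj : Disjoint M.support (G.subgraphOfAdj huw).support := by
    rw [hM.isMatching.support_eq_verts, support_subgraphOfAdj, Set.disjoint_right]
    rintro x (rfl | rfl) <;> assumption
  have hnew : s(u, w) ∉ M.edgeSet := fun h => hu (M.edge_vert h)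
  have := hM.ncard_edgeSet_le _ (hM.isMatching.sup (.subgraphOfAdj huw) hdisj)
  rw [edgeSet_sup, edgeSet_subgraphOfAdj, Set.union_singleton,
    Set.ncard_insert_of_notMem hnew (Set.toFinite _)] at this
  omega

end Subgraph

lemma exists_isMaximumMatching [Finite V] (G : SimpleGraph V) :
    ∃ M : G.Subgraph, M.IsMaximumMatching := by
  obtain ⟨M, hM, hmax⟩ := Set.exists_max_image {M : G.Subgraph | M.IsMatching}
    (fun M => M.edgeSet.ncard) (Set.toFinite _) ⟨⊥, fun v hv => absurd hv (by simp)⟩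
  exact ⟨M, hM, hmax⟩

/-- Double counting the edges between an independent set and its complement. -/
lemma minDegree_mul_card_le_maxDegree_mul_card_compl [Fintype V] [DecidableEq V]
    [DecidableRel G.Adj] {I : Finset V} (hI : G.IsIndepSet I) :
    G.minDegree * #I ≤ G.maxDegree * #Iᶜ := by
  rw [mul_comm, mul_comm G.maxDegree]
  refine card_mul_le_card_mul G.Adj (fun u hu => ?_) (fun v _ => ?_)
  · refine (G.minDegree_le_degree u).trans (card_le_card fun w hw => ?_)
    rw [mem_neighborFinset] at hw
    exact mem_filter.2 ⟨mem_compl.2 fun hwI => hI hu hwI hw.ne hw, hw⟩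
  · refine (card_le_card fun u hu => ?_).trans (G.degree_le_maxDegree v)
    exact (mem_neighborFinset _ _ _).2 (mem_filter.1 hu).2.symm

end SimpleGraph

theorem matching_number_ge_of_degrees_general {V : Type*} [Fintype V]
    (G : SimpleGraph V) [DecidableRel G.Adj] :
    ∃ M : G.Subgraph, M.IsMatching ∧
      (G.minDegree : ℝ) * Fintype.card V / (2 * (G.minDegree + G.maxDegree))
        ≤ (M.edgeSet.ncard : ℝ) := by
  classical
  obtain ⟨M, hM⟩ := G.exists_isMaximumMatching
  refine ⟨M, hM.isMatching, div_le_of_le_mul₀ (by positivity) (by positivity) ?_⟩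
  set I := (M.vertsᶜ).toFinset
  have hIc : #Iᶜ = 2 * M.edgeSet.ncard := by
    rw [← hM.isMatching.ncard_verts, Set.ncard_eq_toFinset_card']
    simp [I]
  have hdouble : G.minDegree * #I ≤ G.maxDegree * (2 * M.edgeSet.ncard) := by
    rw [← hIc]
    exact G.minDegree_mul_card_le_maxDegree_mul_card_compl
      (by simpa [I] using hM.isIndepSet_compl_verts)
  have key :
      G.minDegree * Fintype.card V ≤ M.edgeSet.ncard * (2 * (G.minDegree + G.maxDegree)) := by
    rw [← card_add_card_compl I, hIc]
    nlinarith [hdouble]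
  exact_mod_cast key

theorem matching_number_ge_of_degrees {V : Type*} [Fintype V] [DecidableEq V] [Nonempty V]
    (G : SimpleGraph V) [DecidableRel G.Adj]
    (hpos : 0 < G.minDegree + G.maxDegree) :
    ∃ M : G.Subgraph, M.IsMatching ∧
      (G.minDegree : ℝ) * Fintype.card V / (2 * (G.minDegree + G.maxDegree))
        ≤ (M.edgeSet.ncard : ℝ) :=
  matching_number_ge_of_degrees_general G
end

section
/- For every n ≥ 4 and every k with 2 ≤ k ≤ ⌊n/2⌋, there exists a simple graph G of order n with minimum degree δ(G) = ⌈n/2⌉ + ⌊k/2⌋ − 2 such that G is not a k-ordered Hamiltonian graph. -/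
open SimpleGraph

/-- A Hamiltonian cycle `w` encounters the vertices of `l` in this (cyclic) order
if `l` is a sublist of the support of `w` (for some starting point of the cycle). -/
def SimpleGraph.EncountersInOrder {V : Type*} [DecidableEq V] (G : SimpleGraph V)
    (l : List V) : Prop :=
  ∃ (x : V) (w : G.Walk x x), w.IsHamiltonianCycle ∧ l.Sublist w.support

/-- A Hamiltonian graph is `k`-ordered if every sequence of `k` distinct vertices is
encountered in order by some Hamiltonian cycle. -/
def SimpleGraph.KOrdered {V : Type*} [DecidableEq V] [Fintype V] (G : SimpleGraph V)
    (k : ℕ) : Prop :=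
  ∀ l : List V, l.Nodup → l.length = k → G.EncountersInOrder l

namespace SharpAux


def R (o₁ o₂ : Option Bool) : Prop := o₁ = none ∨ o₂ = none ∨ o₁ = o₂

def sw2 : Option Bool → Option Bool → ℕ
  | some x, some y => if x = y then 0 else 1
  | _, _ => 0

def switches : List (Option Bool) → ℕ
  | a :: b :: t => sw2 a b + switches (b :: t)
  | _ => 0

def pen : Option (Option Bool) → Option (Option Bool) → ℕ
  | some none, _ => 1
  | some (some c), some (some d) => if d = c then 0 else 1
  | _, _ => 0

@[simp] lemma pen_none (y : Option (Option Bool)) : pen (some none) y = 1 := rfl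
@[simp] lemma pen_some_some (c d : Bool) :
    pen (some (some c)) (some (some d)) = if d = c then 0 else 1 := rfl

lemma none_mem_of_chain (L : List (Option Bool)) : ∀ (c : Bool), L.Chain' R →
    L.head? = some (some c) → L.getLast? = some (some (!c)) → none ∈ L := by
  induction L with
  | nil => simp
  | cons a t ih =>
    intro c hch hh hl
    simp only [List.head?_cons, Option.some.injEq] at hh
    subst hh
    cases t with
    | nil => simp at hl
    | cons b t' =>
      have hR : R (some c) b := (List.isChain_cons_cons.mp hch).1
      rcases hR with h | h | h
      · simp at h
      · simp [h]
      · have := ih c (List.isChain_cons_cons.mp hch).2 (by simp [← h])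
          (by simpa [List.getLast?_cons_cons] using hl)
        exact List.mem_cons_of_mem _ this

lemma main_count : ∀ (L p : List (Option Bool)), p ≠ [] → (∀ o ∈ p, o ≠ none) →
    p.Sublist L → L.Chain' R →
    switches p + pen L.head? p.head? + pen L.getLast? p.getLast? ≤ L.count none := by
  intro L
  induction L with
  | nil =>
    intro p hp _ hs _
    exact absurd (List.sublist_nil.mp hs) hp
  | cons o L' ih =>
    intro p hp hnf hs hch
    obtain ⟨q, r0, rfl⟩ : ∃ q r0, p = q :: r0 := by
      cases p with
      | nil => exact absurd rfl hp
      | cons q r0 => exact ⟨q, r0, rfl⟩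
    obtain ⟨d, rfl⟩ : ∃ d, q = some d := by
      cases q with
      | none => exact absurd rfl (hnf none (by simp))
      | some d => exact ⟨d, rfl⟩
    rcases List.sublist_cons_iff.mp hs with hs' | ⟨r, heq, hr⟩
    · -- skip case : p <+ L'
      have hL' : L' ≠ [] := by
        intro h; subst h; exact absurd (List.sublist_nil.mp hs') (by simp)
      obtain ⟨o', L'', rfl⟩ : ∃ o' L'', L' = o' :: L'' := by
        cases L' with
        | nil => exact absurd rfl hL'
        | cons o' L'' => exact ⟨o', L'', rfl⟩
      have IH := ih _ hp hnf hs' (List.isChain_cons_cons.mp hch).2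
      have hR : R o o' := (List.isChain_cons_cons.mp hch).1
      have hlast : (o :: o' :: L'').getLast? = (o' :: L'').getLast? :=
        List.getLast?_cons_cons ..
      rw [hlast]
      cases o with
      | none =>
        have hc : (none :: o' :: L'').count (none : Option Bool)
            = (o' :: L'').count (none : Option Bool) + 1 := List.count_cons_self ..
        rw [hc]
        simp only [List.head?_cons, pen_none]
        omega
      | some c =>
        have hcnt : (some c :: o' :: L'').count (none : Option Bool)
            = (o' :: L'').count (none : Option Bool) := by
          rw [List.count_cons]; simp
        rw [hcnt]
        have hple : pen (some (some c)) ((some d :: r0).head?)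
            ≤ pen ((o' :: L'').head?) ((some d :: r0).head?) := by
          simp only [List.head?_cons, pen_some_some]
          by_cases hdc : d = c
          · simp [hdc]
          · rcases hR with h | h | h
            · simp at h
            · simp [h, hdc]
            · rw [← h]; simp [hdc]
        simp only [List.head?_cons] at IH hple ⊢
        omega
    · -- match case: p = o :: r
      injection heq with h1 h2
      subst h1; subst h2
      have hcnt : (some d :: L').count (none : Option Bool)
          = L'.count (none : Option Bool) := by rw [List.count_cons]; simp
      rw [hcnt]
      have hpen0 : pen ((some d :: L').head?) ((some d :: r0).head?) = 0 := by
        simp only [List.head?_cons, pen_some_some]; simp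
      rw [hpen0]
      cases r0 with
      | nil =>
        -- p = [some d]
        have hsw : switches [some d] = 0 := rfl
        rw [hsw]
        simp only [List.getLast?_singleton]
        have hmono : ∀ z : Option Bool, z ∈ some d :: L' → z ≠ some d → z ∈ L' := by
          intro z hz hzne
          rcases List.mem_cons.mp hz with h | h
          · exact absurd h hzne
          · exact h
        rcases hgl : (some d :: L').getLast? with _ | o2
        · simp at hgl
        · rcases o2 with _ | e
          · have hmem : (none : Option Bool) ∈ some d :: L' := List.mem_of_getLast? hgl
            have hmem' : (none : Option Bool) ∈ L' := hmono none hmem (by simp)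
            have hpos : 0 < L'.count (none : Option Bool) := List.count_pos_iff.mpr hmem'
            simp only [pen_none]
            omega
          · by_cases hed : e = d
            · subst hed; simp
            · have he : e = !d := by cases e <;> cases d <;> simp_all
              subst he
              have hmem : (none : Option Bool) ∈ some d :: L' :=
                none_mem_of_chain _ d hch (by simp) hgl
              have hmem' : (none : Option Bool) ∈ L' := hmono none hmem (by simp)
              have hpos : 0 < L'.count (none : Option Bool) := List.count_pos_iff.mpr hmem'
              simp only [pen_some_some]
              split <;> omega
      | cons q2 r' =>
        obtain ⟨e, rfl⟩ : ∃ e, q2 = some e := by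
          cases q2 with
          | none => exact absurd rfl (hnf none (by simp))
          | some e => exact ⟨e, rfl⟩
        have hL' : L' ≠ [] := by
          intro h; subst h; exact absurd (List.sublist_nil.mp hr) (by simp)
        obtain ⟨o', L'', rfl⟩ : ∃ o' L'', L' = o' :: L'' := by
          cases L' with
          | nil => exact absurd rfl hL'
          | cons o' L'' => exact ⟨o', L'', rfl⟩
        have hR : R (some d) o' := (List.isChain_cons_cons.mp hch).1
        have hchT : List.Chain' R (o' :: L'') := (List.isChain_cons_cons.mp hch).2
        have hsw : switches (some d :: some e :: r') =
            sw2 (some d) (some e) + switches (some e :: r') := rfl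
        have hplast : (some d :: some e :: r').getLast? = (some e :: r').getLast? :=
          List.getLast?_cons_cons ..
        have hllast : (some d :: o' :: L'').getLast? = (o' :: L'').getLast? :=
          List.getLast?_cons_cons ..
        rw [hsw, hplast, hllast]
        by_cases hed : e = d
        · subst hed
          have hsw2 : sw2 (some e) (some e) = 0 := by simp [sw2]
          have IH := ih (some e :: r') (by simp) (fun o ho => hnf o (List.mem_cons_of_mem _ ho))
            hr hchT
          simp only [List.head?_cons] at IH
          omega
        · have hsw2 : sw2 (some d) (some e) = 1 := by
            have hde : d ≠ e := fun h => hed h.symm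
            simp [sw2, hde]
          rcases hR with h | h | h
          · simp at h
          · subst h
            have IH := ih (some e :: r') (by simp) (fun o ho => hnf o (List.mem_cons_of_mem _ ho))
              hr hchT
            simp only [List.head?_cons, pen_none] at IH
            omega
          · have hcd : o' = some d := h.symm
            subst hcd
            have hr' : (some e :: r').Sublist L'' := by
              rcases List.sublist_cons_iff.mp hr with h' | ⟨r2, heq2, hr2⟩
              · exact h'
              · injection heq2 with hh1 _
                exact absurd (Option.some.injEq .. ▸ hh1) (by simpa using hed)
            have IH := ih (some d :: some e :: r') (by simp)
              hnf (List.Sublist.cons₂ _ hr') hchT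
            have hpen2 : pen ((some d :: L'').head?) ((some d :: some e :: r').head?) = 0 := by
              simp only [List.head?_cons, pen_some_some]; simp
            rw [hpen2, hplast] at IH
            omega

def pat : Bool → ℕ → List (Option Bool)
  | _, 0 => []
  | b, m + 1 => some b :: pat (!b) m

@[simp] lemma pat_length : ∀ (m : ℕ) (b : Bool), (pat b m).length = m
  | 0, _ => rfl
  | m + 1, b => by simp [pat, pat_length m]

lemma pat_ne_nil (b : Bool) (m : ℕ) (hm : 0 < m) : pat b m ≠ [] := by
  cases m with
  | zero => omega
  | succ m => simp [pat]

lemma pat_ne_none : ∀ (m : ℕ) (b : Bool), ∀ o ∈ pat b m, o ≠ none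
  | 0, b => by simp [pat]
  | m + 1, b => by
    intro o ho
    rcases List.mem_cons.mp ho with h | h
    · simp [h]
    · exact pat_ne_none m (!b) o h

lemma pat_head? (b : Bool) (m : ℕ) (hm : 0 < m) : (pat b m).head? = some (some b) := by
  cases m with
  | zero => omega
  | succ m => rfl

lemma pat_getLast? : ∀ (m : ℕ) (b : Bool),
    (pat b (m + 1)).getLast? = some (some (if m % 2 = 0 then b else !b))
  | 0, b => rfl
  | m + 1, b => by
    have h1 : pat b (m + 2) = some b :: some (!b) :: pat (!(!b)) m := rfl
    have h1' : some (!b) :: pat (!(!b)) m = pat (!b) (m + 1) := rfl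
    rw [h1, List.getLast?_cons_cons, h1', pat_getLast? m (!b)]
    rcases Nat.even_or_odd m with he | ho
    · have : m % 2 = 0 := Nat.even_iff.mp he
      have h4 : (m + 1) % 2 = 1 := by omega
      simp [this, h4]
    · have : m % 2 = 1 := Nat.odd_iff.mp ho
      have h4 : (m + 1) % 2 = 0 := by omega
      simp [this, h4]

lemma switches_pat : ∀ (m : ℕ) (b : Bool), switches (pat b (m + 1)) = m
  | 0, b => rfl
  | m + 1, b => by
    have h1 : pat b (m + 2) = some b :: some (!b) :: pat (!(!b)) m := rfl
    have h2 : switches (some b :: some (!b) :: pat (!(!b)) m)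
        = sw2 (some b) (some (!b)) + switches (some (!b) :: pat (!(!b)) m) := rfl
    have h3 : sw2 (some b) (some (!b)) = 1 := by simp [sw2]
    have h4 : (some (!b) :: pat (!(!b)) m) = pat (!b) (m+1) := rfl
    rw [h1, h2, h3, h4, switches_pat m (!b)]
    omega

lemma pat_getElem? : ∀ (m : ℕ) (b : Bool) (i : ℕ), i < m →
    (pat b m)[i]? = some (some (if i % 2 = 0 then b else !b))
  | 0, _, _, h => by omega
  | m + 1, b, 0, h => by
    have h0 : pat b (m+1) = some b :: pat (!b) m := rfl
    rw [h0]; simp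
  | m + 1, b, i + 1, h => by
    have h0 : pat b (m+1) = some b :: pat (!b) m := rfl
    rw [h0, List.getElem?_cons_succ, pat_getElem? m (!b) i (by omega)]
    rcases Nat.even_or_odd i with he | ho
    · have h1 : i % 2 = 0 := Nat.even_iff.mp he
      have h2 : (i + 1) % 2 = 1 := by omega
      simp [h1, h2]
    · have h1 : i % 2 = 1 := Nat.odd_iff.mp ho
      have h2 : (i + 1) % 2 = 0 := by omega
      simp [h1, h2]

def sv (k : ℕ) : ℕ := 2 * (k / 2) - 1
def av (n k : ℕ) : ℕ := (n - sv k + 1) / 2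

def side (n k : ℕ) (v : Fin n) : Option Bool :=
  if (v : ℕ) < sv k then none else if (v : ℕ) < sv k + av n k then some false else some true

lemma R_symm {o₁ o₂ : Option Bool} (h : R o₁ o₂) : R o₂ o₁ := by unfold R at *; tauto

def Gr (n k : ℕ) : SimpleGraph (Fin n) where
  Adj u v := u ≠ v ∧ R (side n k u) (side n k v)
  symm := by constructor; intro u v h; exact ⟨h.1.symm, R_symm h.2⟩
  loopless := by constructor; intro v h; exact h.1 rfl

lemma gr_adj {n k : ℕ} (u v : Fin n) :
    (Gr n k).Adj u v ↔ u ≠ v ∧ R (side n k u) (side n k v) := Iff.rfl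

lemma side_eq_none_iff {n k : ℕ} (v : Fin n) : side n k v = none ↔ (v : ℕ) < sv k := by
  unfold side; split_ifs <;> simp <;> omega

lemma side_eq_false_iff {n k : ℕ} (v : Fin n) :
    side n k v = some false ↔ sv k ≤ (v : ℕ) ∧ (v : ℕ) < sv k + av n k := by
  unfold side; split_ifs <;> simp <;> omega

lemma side_eq_true_iff {n k : ℕ} (v : Fin n) :
    side n k v = some true ↔ sv k + av n k ≤ (v : ℕ) := by
  unfold side; split_ifs <;> simp <;> omega

lemma card_filter_lt (n m : ℕ) (h : m ≤ n) :
    ((Finset.univ : Finset (Fin n)).filter (fun v : Fin n => (v : ℕ) < m)).card = m := by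
  have himg : ((Finset.univ : Finset (Fin n)).filter (fun v : Fin n => (v : ℕ) < m)).image Fin.val
      = Finset.range m := by
    ext x
    simp only [Finset.mem_image, Finset.mem_filter, Finset.mem_univ, true_and, Finset.mem_range]
    constructor
    · rintro ⟨v, hv, rfl⟩; exact hv
    · intro hx; exact ⟨⟨x, lt_of_lt_of_le hx h⟩, hx, rfl⟩
  calc ((Finset.univ : Finset (Fin n)).filter (fun v : Fin n => (v : ℕ) < m)).card
      = (((Finset.univ : Finset (Fin n)).filter (fun v : Fin n => (v : ℕ) < m)).image Fin.val).card :=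
        (Finset.card_image_of_injective _ Fin.val_injective).symm
    _ = m := by rw [himg, Finset.card_range]

lemma card_filter_mid (n lo hi : ℕ) (h : hi ≤ n) :
    ((Finset.univ : Finset (Fin n)).filter (fun v : Fin n => lo ≤ (v : ℕ) ∧ (v : ℕ) < hi)).card
      = hi - lo := by
  have himg : ((Finset.univ : Finset (Fin n)).filter
        (fun v : Fin n => lo ≤ (v : ℕ) ∧ (v : ℕ) < hi)).image Fin.val = Finset.Ico lo hi := by
    ext x
    simp only [Finset.mem_image, Finset.mem_filter, Finset.mem_univ, true_and, Finset.mem_Ico]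
    constructor
    · rintro ⟨v, hv, rfl⟩; exact hv
    · intro hx; exact ⟨⟨x, lt_of_lt_of_le hx.2 h⟩, hx, rfl⟩
  calc ((Finset.univ : Finset (Fin n)).filter (fun v : Fin n => lo ≤ (v : ℕ) ∧ (v : ℕ) < hi)).card
      = (((Finset.univ : Finset (Fin n)).filter
          (fun v : Fin n => lo ≤ (v : ℕ) ∧ (v : ℕ) < hi)).image Fin.val).card :=
        (Finset.card_image_of_injective _ Fin.val_injective).symm
    _ = hi - lo := by rw [himg, Nat.card_Ico]

lemma card_filter_notmid (n lo hi : ℕ) (h : hi ≤ n) :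
    ((Finset.univ : Finset (Fin n)).filter (fun v : Fin n => ¬(lo ≤ (v : ℕ) ∧ (v : ℕ) < hi))).card
      = n - (hi - lo) := by
  rw [Finset.filter_not, Finset.card_sdiff_of_subset (Finset.filter_subset _ _)]
  rw [card_filter_mid n lo hi h, Finset.card_univ, Fintype.card_fin]

lemma nbhd_none {n k : ℕ} (v : Fin n) (hv : side n k v = none) :
    (Gr n k).neighborSet v = ↑(Finset.univ.erase v) := by
  ext u
  rw [SimpleGraph.mem_neighborSet, gr_adj]
  simp only [Finset.coe_erase, Set.mem_diff, Finset.coe_univ, Set.mem_univ, true_and,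
    Set.mem_singleton_iff]
  constructor
  · intro h; exact fun he => h.1 he.symm
  · intro h; exact ⟨fun he => h he.symm, Or.inl hv⟩

lemma nbhd_false {n k : ℕ} (v : Fin n) (hv : side n k v = some false) :
    (Gr n k).neighborSet v
      = ↑((Finset.univ.filter (fun u : Fin n => (u : ℕ) < sv k + av n k)).erase v) := by
  ext u
  rw [SimpleGraph.mem_neighborSet, gr_adj]
  simp only [Finset.coe_erase, Set.mem_diff, Finset.mem_coe, Finset.mem_filter,
    Finset.mem_univ, true_and, Set.mem_singleton_iff]
  constructor
  · rintro ⟨hne, hR⟩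
    refine ⟨?_, fun he => hne he.symm⟩
    rcases hsu : side n k u with _ | c
    · have := (side_eq_none_iff u).mp hsu; omega
    · cases c
      · have := (side_eq_false_iff u).mp hsu; omega
      · exfalso; rw [hv, hsu] at hR; rcases hR with h | h | h <;> simp at h
  · rintro ⟨hu, hne⟩
    refine ⟨fun he => hne he.symm, ?_⟩
    rcases hsu : side n k u with _ | c
    · exact Or.inr (Or.inl rfl)
    · cases c
      · rw [hv]; exact Or.inr (Or.inr rfl)
      · exfalso; have := (side_eq_true_iff u).mp hsu; omega

lemma nbhd_true {n k : ℕ} (v : Fin n) (hv : side n k v = some true) :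
    (Gr n k).neighborSet v
      = ↑((Finset.univ.filter
          (fun u : Fin n => ¬(sv k ≤ (u : ℕ) ∧ (u : ℕ) < sv k + av n k))).erase v) := by
  ext u
  rw [SimpleGraph.mem_neighborSet, gr_adj]
  simp only [Finset.coe_erase, Set.mem_diff, Finset.mem_coe, Finset.mem_filter,
    Finset.mem_univ, true_and, Set.mem_singleton_iff]
  constructor
  · rintro ⟨hne, hR⟩
    refine ⟨?_, fun he => hne he.symm⟩
    rcases hsu : side n k u with _ | c
    · have := (side_eq_none_iff u).mp hsu; omega
    · cases c
      · exfalso; rw [hv, hsu] at hR; rcases hR with h | h | h <;> simp at h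
      · have := (side_eq_true_iff u).mp hsu; omega
  · rintro ⟨hu, hne⟩
    refine ⟨fun he => hne he.symm, ?_⟩
    rcases hsu : side n k u with _ | c
    · exact Or.inr (Or.inl rfl)
    · cases c
      · exfalso
        have := (side_eq_false_iff u).mp hsu
        exact hu this
      · rw [hv]; exact Or.inr (Or.inr rfl)


def seqf (n k i : ℕ) : ℕ := if i % 2 = 0 then sv k + i / 2 else sv k + av n k + i / 2

def seqL (n k : ℕ) (h : 0 < n) : List (Fin n) :=
  (List.range k).map fun i => ⟨seqf n k i % n, Nat.mod_lt _ h⟩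

lemma seqf_lt {n k : ℕ} (hn : 4 ≤ n) (hk2 : 2 ≤ k) (hkn : k ≤ n / 2)
    (i : ℕ) (hik : i < k) : seqf n k i < n := by
  simp only [seqf, av, sv]; split_ifs <;> omega

lemma side_seq {n k : ℕ} (hn : 4 ≤ n) (hk2 : 2 ≤ k) (hkn : k ≤ n / 2) (h0 : 0 < n)
    (i : ℕ) (hik : i < k) :
    side n k ⟨seqf n k i % n, Nat.mod_lt _ h0⟩
      = if i % 2 = 0 then some false else some true := by
  have hlt : seqf n k i < n := seqf_lt hn hk2 hkn i hik
  by_cases hi : i % 2 = 0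
  · rw [if_pos hi, side_eq_false_iff]
    show sv k ≤ seqf n k i % n ∧ seqf n k i % n < sv k + av n k
    rw [Nat.mod_eq_of_lt hlt]
    simp only [seqf, av, sv]; rw [if_pos hi]; omega
  · rw [if_neg hi, side_eq_true_iff]
    show sv k + av n k ≤ seqf n k i % n
    rw [Nat.mod_eq_of_lt hlt]
    simp only [seqf, av, sv]; rw [if_neg hi]; omega

lemma seq_length {n k : ℕ} (h0 : 0 < n) : (seqL n k h0).length = k := by simp [seqL]

lemma seq_nodup {n k : ℕ} (hn : 4 ≤ n) (hk2 : 2 ≤ k) (hkn : k ≤ n / 2) (h0 : 0 < n) :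
    (seqL n k h0).Nodup := by
  unfold seqL
  refine List.Nodup.map_on ?_ List.nodup_range
  intro i hi j hj hf
  simp only [List.mem_range] at hi hj
  have h1 : seqf n k i % n = seqf n k j % n := by
    simpa using congrArg Fin.val hf
  rw [Nat.mod_eq_of_lt (seqf_lt hn hk2 hkn i hi),
    Nat.mod_eq_of_lt (seqf_lt hn hk2 hkn j hj)] at h1
  simp only [seqf, av, sv] at h1
  split_ifs at h1 <;> omega

lemma seq_map_side {n k : ℕ} (hn : 4 ≤ n) (hk2 : 2 ≤ k) (hkn : k ≤ n / 2) (h0 : 0 < n) :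
    (seqL n k h0).map (side n k) = pat false k := by
  apply List.ext_getElem?
  intro i
  by_cases hik : i < k
  · rw [pat_getElem? k false i hik]
    unfold seqL
    rw [List.getElem?_map, List.getElem?_map, List.getElem?_range hik]
    simp only [Option.map_some]
    rw [side_seq hn hk2 hkn h0 i hik]
    by_cases hi : i % 2 = 0 <;> simp [hi]
  · have h1 : ((seqL n k h0).map (side n k)).length = k := by simp [seqL]
    rw [List.getElem?_eq_none (by omega : ((seqL n k h0).map (side n k)).length ≤ i),
      List.getElem?_eq_none (by rw [pat_length]; omega)]

lemma count_none_map_side {n k : ℕ} (hsn : sv k ≤ n) (t : List (Fin n))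
    (hnd : t.Nodup) (hall : ∀ v : Fin n, v ∈ t) :
    (t.map (side n k)).count none = sv k := by
  have h1 : (t.map (side n k)).count none
      = t.countP (fun v => side n k v == none) := by
    show (t.map (side n k)).countP (· == none) = _
    rw [List.countP_map]
    rfl
  rw [h1, List.countP_eq_length_filter]
  have hnd2 : (t.filter (fun v => side n k v == none)).Nodup := hnd.filter _
  rw [← List.toFinset_card_of_nodup hnd2, List.toFinset_filter]
  have ht : t.toFinset = Finset.univ :=
    Finset.eq_univ_iff_forall.mpr (fun v => List.mem_toFinset.mpr (hall v))
  rw [ht]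
  rw [Finset.filter_congr (q := fun v : Fin n => (v : ℕ) < sv k)
    (fun x _ => by simp [side_eq_none_iff])]
  exact card_filter_lt n (sv k) hsn

end SharpAux

open SharpAux in
/-- Sharpness: for every `n ≥ 4` and `2 ≤ k ≤ ⌊n/2⌋` there is a graph of order `n` with
minimum degree exactly `⌈n/2⌉ + ⌊k/2⌋ - 2` that is not a `k`-ordered Hamiltonian graph. -/
theorem sharpness_example (n k : ℕ) (hn : 4 ≤ n) (hk2 : 2 ≤ k) (hkn : k ≤ n / 2) :
    ∃ G : SimpleGraph (Fin n),
      (∀ v : Fin n, (n + 1) / 2 + k / 2 - 2 ≤ (G.neighborSet v).ncard) ∧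
      (∃ v : Fin n, (G.neighborSet v).ncard = (n + 1) / 2 + k / 2 - 2) ∧
      ¬ G.KOrdered k := by
  have h0 : 0 < n := by omega
  have hs_le : sv k + av n k ≤ n := by simp only [sv, av]; omega
  have hsn : sv k ≤ n := by simp only [sv]; omega
  refine ⟨Gr n k, ?_, ?_, ?_⟩
  · intro v
    rcases hsv : side n k v with _ | c
    · rw [nbhd_none v hsv, Set.ncard_coe_finset,
        Finset.card_erase_of_mem (Finset.mem_univ v), Finset.card_univ, Fintype.card_fin]
      omega
    · cases c
      · have hmem : v ∈ Finset.univ.filter (fun u : Fin n => (u : ℕ) < sv k + av n k) :=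
          Finset.mem_filter.mpr ⟨Finset.mem_univ v, ((side_eq_false_iff v).mp hsv).2⟩
        rw [nbhd_false v hsv, Set.ncard_coe_finset, Finset.card_erase_of_mem hmem,
          card_filter_lt n _ hs_le]
        simp only [sv, av]
        omega
      · have hv' : sv k + av n k ≤ (v : ℕ) := (side_eq_true_iff v).mp hsv
        have hmem : v ∈ Finset.univ.filter
            (fun u : Fin n => ¬(sv k ≤ (u : ℕ) ∧ (u : ℕ) < sv k + av n k)) :=
          Finset.mem_filter.mpr ⟨Finset.mem_univ v, by omega⟩
        rw [nbhd_true v hsv, Set.ncard_coe_finset, Finset.card_erase_of_mem hmem,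
          card_filter_notmid n _ _ hs_le]
        simp only [sv, av]
        omega
  · refine ⟨⟨n - 1, by omega⟩, ?_⟩
    have hsv : side n k (⟨n - 1, by omega⟩ : Fin n) = some true := by
      rw [side_eq_true_iff]
      show sv k + av n k ≤ n - 1
      simp only [sv, av]; omega
    have hv' : sv k + av n k ≤ n - 1 := by simp only [sv, av]; omega
    have hmem : (⟨n - 1, by omega⟩ : Fin n) ∈ Finset.univ.filter
        (fun u : Fin n => ¬(sv k ≤ (u : ℕ) ∧ (u : ℕ) < sv k + av n k)) :=
      Finset.mem_filter.mpr ⟨Finset.mem_univ _, by show ¬(_ ∧ n - 1 < _); omega⟩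
    rw [nbhd_true _ hsv, Set.ncard_coe_finset, Finset.card_erase_of_mem hmem,
      card_filter_notmid n _ _ hs_le]
    simp only [sv, av]
    omega
  · intro hK
    obtain ⟨x, w, hw, hsub⟩ :=
      hK (seqL n k h0) (seq_nodup hn hk2 hkn h0) (seq_length h0)
    set L := w.support.map (side n k) with hL
    have hch : L.Chain' R :=
      List.isChain_map_of_isChain _ (fun a b hab => hab.2) w.isChain_adj_support
    have hpat : (pat false k).Sublist L := by
      rw [← seq_map_side hn hk2 hkn h0]
      exact hsub.map _
    have hbound := main_count L (pat false k) (pat_ne_nil _ _ (by omega))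
      (pat_ne_none _ _) hpat hch
    have hsupp : w.support = x :: w.support.tail := w.support_eq_cons
    have hhead : L.head? = some (side n k x) := by rw [hL, hsupp]; rfl
    have hlastsupp : w.support.getLast? = some x := by
      have h1 : w.support.reverse.head? = some x := by
        rw [← SimpleGraph.Walk.support_reverse, w.reverse.support_eq_cons]; rfl
      rwa [List.head?_reverse] at h1
    have hlast : L.getLast? = some (side n k x) := by
      rw [hL, List.getLast?_map, hlastsupp]; rfl
    have htnd : w.support.tail.Nodup := hw.isCycle.support_nodup
    have htall : ∀ v : Fin n, v ∈ w.support.tail := by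
      intro v
      rw [← SimpleGraph.Walk.support_tail_of_not_nil w hw.isCycle.not_nil]
      exact hw.isHamiltonian_tail.mem_support v
    have hcnt_tail : (w.support.tail.map (side n k)).count none = sv k :=
      count_none_map_side hsn _ htnd htall
    have hcnt : L.count none = sv k + (if side n k x = none then 1 else 0) := by
      rw [hL, hsupp, List.map_cons, List.count_cons, hcnt_tail]
      by_cases hsx : side n k x = none <;> simp [hsx]
    have hph : (pat false k).head? = some (some false) := pat_head? _ _ (by omega)
    have hpl : (pat false k).getLast?
        = some (some (if (k - 1) % 2 = 0 then false else !false)) := by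
      have h2 := pat_getLast? (k - 1) false
      rw [Nat.sub_add_cancel (by omega : 1 ≤ k)] at h2
      exact h2
    have hsw : switches (pat false k) = k - 1 := by
      have h2 := switches_pat (k - 1) false
      rw [Nat.sub_add_cancel (by omega : 1 ≤ k)] at h2
      exact h2
    rw [hhead, hlast, hph, hpl, hsw, hcnt] at hbound
    by_cases hsx : side n k x = none
    · rw [if_pos hsx, hsx] at hbound
      simp only [pen_none] at hbound
      simp only [sv] at hbound
      omega
    · rw [if_neg hsx] at hbound
      obtain ⟨c, hc⟩ : ∃ c, side n k x = some c := by
        rcases h' : side n k x with _ | c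
        · exact absurd h' hsx
        · exact ⟨c, rfl⟩
      rw [hc] at hbound
      by_cases hpar : (k - 1) % 2 = 0
      · rw [if_pos hpar] at hbound
        cases c <;> simp only [pen_some_some, Bool.not_false] at hbound <;>
          simp at hbound <;> simp only [sv] at hbound <;> omega
      · rw [if_neg hpar] at hbound
        cases c <;> simp only [pen_some_some, Bool.not_false] at hbound <;>
          simp at hbound <;> simp only [sv] at hbound <;> omega
end

section
/- Let G be the graph on U ∪ W with U = {u_1, ..., u_{⌊n/2⌋}} and W = {w_1, ..., w_{⌈n/2⌉}} inducing complete subgraphs, where the cross edges are exactly all edges from U to {w_1, ..., w_{⌊k/2⌋}} together with all edges from W to {u_1, ..., u_{⌊k/2⌋−1}}, for 2 ≤ k ≤ ⌊n/2⌋. Then G contains no Hamiltonian cycle that encounters the sequence u_{⌊k/2⌋}, w_{⌊k/2⌋+1}, u_{⌊k/2⌋+1}, w_{⌊k/2⌋+2}, ..., u_{2⌊k/2⌋−1}, w_{2⌊k/2⌋} (followed by u_{2⌊k/2⌋} if k is odd) in this order; in particular G is not a k-ordered Hamiltonian graph. -/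
open SimpleGraph

/-- The extremal graph of the paper: vertices `U = Fin (n/2)` (the `u_i`, 0-indexed) and
`W = Fin ((n+1)/2)` (the `w_j`, 0-indexed); `U` and `W` are cliques, and `u_i ~ w_j`
iff `j ≤ ⌊k/2⌋` or `i ≤ ⌊k/2⌋ - 1` (1-indexed), i.e. `j+1 ≤ k/2 ∨ i+2 ≤ k/2` 0-indexed. -/
def paperGraph (n k : ℕ) : SimpleGraph (Fin (n / 2) ⊕ Fin ((n + 1) / 2)) where
  Adj x y := x ≠ y ∧
    (∀ i j, x = Sum.inl i → y = Sum.inr j → (j.val + 1 ≤ k / 2 ∨ i.val + 2 ≤ k / 2)) ∧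
    (∀ i j, x = Sum.inr j → y = Sum.inl i → (j.val + 1 ≤ k / 2 ∨ i.val + 2 ≤ k / 2))
  symm := by
    constructor
    rintro x y ⟨h1, h2, h3⟩
    exact ⟨h1.symm, fun i j hy hx => h3 i j hx hy, fun i j hy hx => h2 i j hx hy⟩
  loopless := by constructor; rintro x ⟨h, -⟩; exact h rfl

/-- The bad sequence `u_{⌊k/2⌋}, w_{⌊k/2⌋+1}, u_{⌊k/2⌋+1}, w_{⌊k/2⌋+2}, …,
u_{2⌊k/2⌋-1}, w_{2⌊k/2⌋}` (followed by `u_{2⌊k/2⌋}` if `k` is odd), 0-indexed. -/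
def badSeq (n k : ℕ) (hk2 : 2 ≤ k) (hkn : k ≤ n / 2) :
    List (Fin (n / 2) ⊕ Fin ((n + 1) / 2)) :=
  (List.ofFn (fun t : Fin (k / 2) =>
    [Sum.inl (⟨k / 2 - 1 + t.val, by have := t.isLt; omega⟩ : Fin (n / 2)),
     Sum.inr (⟨k / 2 + t.val, by have := t.isLt; omega⟩ : Fin ((n + 1) / 2))])).flatten ++
  (if Odd k then [Sum.inl (⟨k - 2, by omega⟩ : Fin (n / 2))] else [])

/-- small vertices: the cut set. -/
def smallV (n k : ℕ) : Fin (n / 2) ⊕ Fin ((n + 1) / 2) → Prop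
  | .inl i => i.val + 2 ≤ k / 2
  | .inr j => j.val + 1 ≤ k / 2

instance (n k : ℕ) : DecidablePred (smallV n k) := fun v => by
  cases v <;> (dsimp [smallV]; infer_instance)

/-- the generating function for the bad sequence. -/
def badFun (n k : ℕ) (h : 0 < n / 2) (s : ℕ) : Fin (n / 2) ⊕ Fin ((n + 1) / 2) :=
  if 2 ∣ s then Sum.inl ⟨(k / 2 - 1 + s / 2) % (n / 2), Nat.mod_lt _ h⟩
  else Sum.inr ⟨(k / 2 + s / 2) % ((n + 1) / 2), Nat.mod_lt _ (by omega)⟩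

lemma flatten_map_pair {α : Type*} (g : ℕ → α) :
    ∀ m : ℕ, (((List.range m).map fun t => [g (2 * t), g (2 * t + 1)]).flatten) =
      (List.range (2 * m)).map g := by
  intro m
  induction m with
  | zero => simp
  | succ m ih =>
    rw [List.range_succ, List.map_append, List.flatten_append, ih]
    have h2 : 2 * (m + 1) = (2 * m + 1) + 1 := by ring
    rw [h2, List.range_succ, List.range_succ, List.map_append, List.map_append]
    simp [List.append_assoc]

lemma badSeq_eq (n k : ℕ) (hk2 : 2 ≤ k) (hkn : k ≤ n / 2) :
    badSeq n k hk2 hkn = (List.range k).map (badFun n k (by omega)) := by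
  have h : 0 < n / 2 := by omega
  have hofn : (List.ofFn (fun t : Fin (k / 2) =>
      [Sum.inl (⟨k / 2 - 1 + t.val, by have := t.isLt; omega⟩ : Fin (n / 2)),
       Sum.inr (⟨k / 2 + t.val, by have := t.isLt; omega⟩ : Fin ((n + 1) / 2))])) =
      (List.range (k / 2)).map fun t => [badFun n k h (2 * t), badFun n k h (2 * t + 1)] := by
    apply List.ext_getElem
    · simp
    · intro i h1 h2
      simp only [List.getElem_ofFn, List.getElem_map, List.getElem_range] at *
      have hi : i < k / 2 := by simpa using h1
      have e1 : (2 * i) / 2 = i := by omega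
      have e2 : (2 * i + 1) / 2 = i := by omega
      have d1 : 2 ∣ 2 * i := ⟨i, rfl⟩
      have d2 : ¬ 2 ∣ (2 * i + 1) := by omega
      simp only [badFun, if_pos d1, if_neg d2, e1, e2]
      have m1 : k / 2 - 1 + i < n / 2 := by omega
      have m2 : k / 2 + i < (n + 1) / 2 := by omega
      simp only [Nat.mod_eq_of_lt m1, Nat.mod_eq_of_lt m2]
  unfold badSeq
  rw [hofn, flatten_map_pair]
  rcases Nat.even_or_odd k with hkE | hkO
  · rw [if_neg (by simpa using hkE)]
    rw [List.append_nil]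
    obtain ⟨c, hc⟩ := hkE
    have : 2 * (k / 2) = k := by omega
    rw [this]
  · rw [if_pos hkO]
    have hk : List.range k = List.range (2 * (k / 2)) ++ [2 * (k / 2)] := by
      rw [← List.range_succ]
      obtain ⟨c, hc⟩ := hkO
      congr 1
      omega
    rw [hk, List.map_append]
    congr 1
    have d1 : 2 ∣ 2 * (k / 2) := ⟨k / 2, rfl⟩
    have e1 : (2 * (k / 2)) / 2 = k / 2 := by omega
    obtain ⟨c, hc⟩ := hkO
    have m3 : k / 2 - 1 + k / 2 < n / 2 := by omega
    simp only [List.map_cons, List.map_nil, badFun, if_pos d1, e1, Nat.mod_eq_of_lt m3]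
    exact congrArg (fun a => [Sum.inl a]) (Fin.ext (by simp; omega))

lemma badFun_isLeft (n k : ℕ) (h : 0 < n / 2) (s : ℕ) :
    (badFun n k h s).isLeft = decide (2 ∣ s) := by
  unfold badFun; split <;> simp_all

lemma badFun_big (n k : ℕ) (h : 0 < n / 2) (hk2 : 2 ≤ k) (hkn : k ≤ n / 2)
    {s : ℕ} (hs : s < k) : ¬ smallV n k (badFun n k h s) := by
  unfold badFun
  by_cases hd : 2 ∣ s
  · rw [if_pos hd]
    have m1 : k / 2 - 1 + s / 2 < n / 2 := by omega
    simp only [smallV, Nat.mod_eq_of_lt m1]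
    omega
  · rw [if_neg hd]
    have m2 : k / 2 + s / 2 < (n + 1) / 2 := by omega
    simp only [smallV, Nat.mod_eq_of_lt m2]
    omega

lemma badFun_inj (n k : ℕ) (h : 0 < n / 2) (hk2 : 2 ≤ k) (hkn : k ≤ n / 2)
    {s t : ℕ} (hs : s < k) (ht : t < k) (he : badFun n k h s = badFun n k h t) : s = t := by
  unfold badFun at he
  by_cases hds : 2 ∣ s <;> by_cases hdt : 2 ∣ t
  · rw [if_pos hds, if_pos hdt] at he
    have := congrArg (fun v => Sum.elim (fun i : Fin (n/2) => i.val) (fun j : Fin ((n+1)/2) => j.val) v) he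
    simp only [Sum.elim_inl] at this
    have m1 : k / 2 - 1 + s / 2 < n / 2 := by omega
    have m2 : k / 2 - 1 + t / 2 < n / 2 := by omega
    rw [Nat.mod_eq_of_lt m1, Nat.mod_eq_of_lt m2] at this
    omega
  · rw [if_pos hds, if_neg hdt] at he; exact absurd he (by simp)
  · rw [if_neg hds, if_pos hdt] at he; exact absurd he (by simp)
  · rw [if_neg hds, if_neg hdt] at he
    have := congrArg (fun v => Sum.elim (fun i : Fin (n/2) => i.val) (fun j : Fin ((n+1)/2) => j.val) v) he
    simp only [Sum.elim_inr] at this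
    have m1 : k / 2 + s / 2 < (n + 1) / 2 := by omega
    have m2 : k / 2 + t / 2 < (n + 1) / 2 := by omega
    rw [Nat.mod_eq_of_lt m1, Nat.mod_eq_of_lt m2] at this
    omega

lemma card_filter_fin_lt (N c : ℕ) (h : c ≤ N) :
    (Finset.univ.filter (fun i : Fin N => i.val < c)).card = c := by
  have he : (Finset.univ.filter (fun i : Fin N => i.val < c)) =
      Finset.univ.map ⟨fun j : Fin c => (⟨j.val, lt_of_lt_of_le j.isLt h⟩ : Fin N),
        fun a b hab => by simpa [Fin.ext_iff] using hab⟩ := by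
    ext i
    simp only [Finset.mem_filter, Finset.mem_univ, true_and, Finset.mem_map,
      Function.Embedding.coeFn_mk]
    constructor
    · intro hi; exact ⟨⟨i.val, hi⟩, Fin.ext rfl⟩
    · rintro ⟨j, rfl⟩; exact j.isLt
  rw [he, Finset.card_map, Finset.card_univ, Fintype.card_fin]

lemma card_small (n k : ℕ) (hk2 : 2 ≤ k) (hkn : k ≤ n / 2) :
    (Finset.univ.filter (smallV n k)).card = 2 * (k / 2) - 1 := by
  have he : Finset.univ.filter (smallV n k) =
      ((Finset.univ.filter fun i : Fin (n / 2) => i.val < k / 2 - 1).map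
        ⟨Sum.inl, Sum.inl_injective⟩) ∪
      ((Finset.univ.filter fun j : Fin ((n + 1) / 2) => j.val < k / 2).map
        ⟨Sum.inr, Sum.inr_injective⟩) := by
    ext v
    cases v with
    | inl i =>
      simp only [Finset.mem_filter, Finset.mem_univ, true_and, Finset.mem_union,
        Finset.mem_map, Function.Embedding.coeFn_mk]
      simp only [smallV]
      constructor
      · intro hv; left; exact ⟨i, by simp; omega⟩
      · rintro (⟨j, hj, he⟩ | ⟨j, hj, he⟩)
        · cases he; omega
        · cases he
    | inr j =>
      simp only [Finset.mem_filter, Finset.mem_univ, true_and, Finset.mem_union,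
        Finset.mem_map, Function.Embedding.coeFn_mk]
      simp only [smallV]
      constructor
      · intro hv; right; exact ⟨j, by simp; omega⟩
      · rintro (⟨i, hi, he⟩ | ⟨i, hi, he⟩)
        · cases he
        · cases he; omega
  rw [he, Finset.card_union_of_disjoint, Finset.card_map, Finset.card_map,
    card_filter_fin_lt _ _ (by omega), card_filter_fin_lt _ _ (by omega)]
  · omega
  · rw [Finset.disjoint_left]
    rintro v hv hv'
    simp only [Finset.mem_map, Function.Embedding.coeFn_mk] at hv hv'
    obtain ⟨i, -, rfl⟩ := hv
    obtain ⟨j, -, hj⟩ := hv'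
    cases hj

lemma cross_small {n k : ℕ} {u v : Fin (n / 2) ⊕ Fin ((n + 1) / 2)}
    (h : (paperGraph n k).Adj u v) (hs : u.isLeft ≠ v.isLeft) :
    smallV n k u ∨ smallV n k v := by
  obtain ⟨-, h1, h2⟩ := h
  cases u with
  | inl i =>
    cases v with
    | inl _ => simp at hs
    | inr j =>
      rcases h1 i j rfl rfl with hh | hh
      · right; exact hh
      · left; exact hh
  | inr j =>
    cases v with
    | inl i =>
      rcases h2 i j rfl rfl with hh | hh
      · left; exact hh
      · right; exact hh
    | inr _ => simp at hs

lemma exists_small_seg {n k : ℕ} {L : List (Fin (n / 2) ⊕ Fin ((n + 1) / 2))}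
    (hc : L.Chain' (paperGraph n k).Adj) :
    ∀ (d a b : ℕ) (hab : a ≤ b) (hb : b < L.length), b - a ≤ d →
      (L[a]'(by omega)).isLeft ≠ (L[b]'hb).isLeft →
      ∃ r, a ≤ r ∧ r ≤ b ∧ ∃ hr : r < L.length, smallV n k (L[r]'hr) := by
  intro d
  induction d with
  | zero =>
    intro a b hab hb hd hne
    have : a = b := by omega
    subst this
    exact absurd rfl hne
  | succ d ih =>
    intro a b hab hb hd hne
    rcases eq_or_lt_of_le hab with rfl | hab'
    · exact absurd rfl hne
    · have ha1 : a + 1 ≤ b := hab'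
      have hadj : (paperGraph n k).Adj (L[a]'(by omega)) (L[a + 1]'(by omega)) := by
        have := List.isChain_iff_getElem.mp hc a (by omega)
        simpa using this
      by_cases hsd : (L[a]'(by omega)).isLeft = (L[a + 1]'(by omega)).isLeft
      · obtain ⟨r, h1, h2, h3⟩ := ih (a + 1) b ha1 hb (by omega) (by rw [← hsd]; exact hne)
        exact ⟨r, by omega, h2, h3⟩
      · rcases cross_small hadj hsd with hh | hh
        · exact ⟨a, le_refl _, by omega, by omega, hh⟩
        · exact ⟨a + 1, by omega, ha1, by omega, hh⟩

lemma core {n k : ℕ} (hk2 : 2 ≤ k) (hkn : k ≤ n / 2) (hn2 : 0 < n / 2)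
    (L : List (Fin (n / 2) ⊕ Fin ((n + 1) / 2)))
    (hchain : L.Chain' (paperGraph n k).Adj)
    (htail : L.tail.Nodup)
    (hLk : k ≤ L.length)
    (hcl : L[0]'(by omega) = L[L.length - 1]'(by omega))
    (q : ℕ → ℕ) (hqlt : ∀ t, q t < L.length)
    (hmono : ∀ s t : ℕ, s < t → t < k → q s < q t)
    (hqv : ∀ t (ht : t < k), L[q t]'(hqlt t) = badFun n k hn2 t) :
    False := by
  have hm1 : 1 ≤ k / 2 := by omega
  have hside : ∀ t (ht : t < k), (L[q t]'(hqlt t)).isLeft = decide (2 ∣ t) := by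
    intro t ht; rw [hqv t ht, badFun_isLeft]
  have hbig : ∀ t (ht : t < k), ¬ smallV n k (L[q t]'(hqlt t)) := by
    intro t ht; rw [hqv t ht]; exact badFun_big n k hn2 hk2 hkn ht
  -- the contradiction builder
  have final : ∀ R' : List ℕ, R'.length = 2 * (k / 2) → R'.Pairwise (· < ·) →
      (∀ r ∈ R', 0 < r ∧ ∃ hr : r < L.length, smallV n k (L[r]'hr)) → False := by
    intro R' hl hp hm
    have hLpos : 0 < L.length := by omega
    set d : Fin (n / 2) ⊕ Fin ((n + 1) / 2) := L[0]'hLpos with hd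
    have hnodup : (R'.map (fun r => L.getD r d)).Nodup := by
      show (R'.map (fun r => L.getD r d)).Pairwise (· ≠ ·)
      rw [List.pairwise_map]
      refine hp.imp_of_mem ?_
      intro a b ha hb hab
      obtain ⟨ha0, haL, hsa⟩ := hm a ha
      obtain ⟨hb0, hbL, hsb⟩ := hm b hb
      intro he
      rw [List.getD_eq_getElem L d haL, List.getD_eq_getElem L d hbL] at he
      have ta : a - 1 < L.tail.length := by rw [List.length_tail]; omega
      have tb : b - 1 < L.tail.length := by rw [List.length_tail]; omega
      have ea : L.tail[a-1]'ta = L[a]'haL := by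
        rw [List.getElem_tail]
        congr 1
        omega
      have eb : L.tail[b-1]'tb = L[b]'hbL := by
        rw [List.getElem_tail]
        congr 1
        omega
      have : a - 1 = b - 1 := (List.Nodup.getElem_inj_iff htail).mp (by rw [ea, eb]; exact he)
      omega
    have hsubset : (R'.map (fun r => L.getD r d)).toFinset ⊆
        Finset.univ.filter (smallV n k) := by
      intro v hv
      rw [List.mem_toFinset, List.mem_map] at hv
      obtain ⟨r, hr, rfl⟩ := hv
      obtain ⟨hr0, hrL, hsr⟩ := hm r hr
      rw [Finset.mem_filter]
      exact ⟨Finset.mem_univ _, by rw [List.getD_eq_getElem L d hrL]; exact hsr⟩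
    have hcard := Finset.card_le_card hsubset
    rw [List.toFinset_card_of_nodup hnodup, card_small n k hk2 hkn] at hcard
    simp only [List.length_map, hl] at hcard
    omega
  -- main induction
  have main : ∀ t, t < k → ∃ R : List ℕ, R.length = t ∧ R.Pairwise (· < ·) ∧
      ∀ r ∈ R, q 0 < r ∧ r < q t ∧ ∃ hr : r < L.length, smallV n k (L[r]'hr) := by
    intro t
    induction t with
    | zero => exact fun _ => ⟨[], rfl, List.Pairwise.nil, by simp⟩
    | succ t ih =>
      intro ht1
      obtain ⟨R, hRl, hRp, hRm⟩ := ih (by omega)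
      have hmt : q t < q (t + 1) := hmono t (t + 1) (by omega) ht1
      have hsd : (L[q t]'(hqlt t)).isLeft ≠ (L[q (t + 1)]'(hqlt (t + 1))).isLeft := by
        rw [hside t (by omega), hside (t + 1) ht1]
        simp only [ne_eq, decide_eq_decide]
        omega
      obtain ⟨r, hr1, hr2, hr, hrs⟩ := exists_small_seg hchain (q (t + 1) - q t) (q t)
        (q (t + 1)) hmt.le (hqlt (t + 1)) le_rfl hsd
      have hne1 : r ≠ q t := by
        intro hh; subst hh; exact hbig t (by omega) hrs
      have hne2 : r ≠ q (t + 1) := by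
        intro hh; subst hh; exact hbig (t + 1) ht1 hrs
      refine ⟨R ++ [r], by simp [hRl], ?_, ?_⟩
      · rw [List.pairwise_append]
        refine ⟨hRp, List.pairwise_singleton _ _, ?_⟩
        intro a ha b hb
        rcases List.mem_singleton.mp hb with rfl
        have := (hRm a ha).2.1
        omega
      · intro s hs
        rcases List.mem_append.mp hs with hs | hs
        · obtain ⟨h1, h2, h3⟩ := hRm s hs
          exact ⟨h1, by omega, h3⟩
        · rcases List.mem_singleton.mp hs with rfl
          have hq0t : q 0 ≤ q t := by
            rcases Nat.eq_zero_or_pos t with rfl | htpos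
            · exact le_rfl
            · exact (hmono 0 t htpos (by omega)).le
          exact ⟨by omega, by omega, hr, hrs⟩
  obtain ⟨R, hRl, hRp, hRm⟩ := main (k - 1) (by omega)
  have hNlt : L.length - 1 < L.length := by omega
  rcases Nat.even_or_odd k with hkE | hkO
  · -- even k : need one extra small vertex from the wrap-around
    obtain ⟨c, hc⟩ := hkE
    have hkd : ¬ (2 ∣ (k - 1)) := by omega
    have hsdl : (L[q (k - 1)]'(hqlt (k - 1))).isLeft = false := by
      rw [hside (k - 1) (by omega)]
      simpa using hkd
    have hsd0 : (L[q 0]'(hqlt 0)).isLeft = true := by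
      rw [hside 0 (by omega)]
      simp
    by_cases hA : (L[L.length - 1]'hNlt).isLeft = (L[q (k - 1)]'(hqlt (k - 1))).isLeft
    · -- wrap crossing happens between position 0 and q 0
      have h0 : (L[0]'(by omega)).isLeft ≠ (L[q 0]'(hqlt 0)).isLeft := by
        rw [hcl, hA, hsdl, hsd0]
        simp
      obtain ⟨r, hr1, hr2, hr, hrs⟩ := exists_small_seg hchain (q 0) 0 (q 0)
        (Nat.zero_le _) (hqlt 0) le_rfl h0
      have hne : r ≠ q 0 := by
        intro hh; subst hh; exact hbig 0 (by omega) hrs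
      rcases Nat.eq_zero_or_pos r with rfl | hrpos
      · -- the small vertex is the basepoint itself; use position L.length - 1 instead
        have hsN : smallV n k (L[L.length - 1]'hNlt) := by
          rw [← hcl]; exact hrs
        refine final (R ++ [L.length - 1]) (by simp [hRl]; omega) ?_ ?_
        · rw [List.pairwise_append]
          refine ⟨hRp, List.pairwise_singleton _ _, ?_⟩
          intro a ha b hb
          rcases List.mem_singleton.mp hb with rfl
          have h1 := (hRm a ha).2.1
          have h2 := hqlt (k - 1)
          omega
        · intro s hs
          rcases List.mem_append.mp hs with hs | hs
          · obtain ⟨h1, h2, h3⟩ := hRm s hs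
            exact ⟨by omega, h3⟩
          · rcases List.mem_singleton.mp hs with rfl
            exact ⟨by omega, hNlt, hsN⟩
      · refine final (r :: R) (by simp [hRl]; omega) ?_ ?_
        · rw [List.pairwise_cons]
          refine ⟨?_, hRp⟩
          intro s hs
          have := (hRm s hs).1
          omega
        · intro s hs
          rcases List.mem_cons.mp hs with rfl | hs
          · exact ⟨hrpos, hr, hrs⟩
          · obtain ⟨h1, h2, h3⟩ := hRm s hs
            exact ⟨by omega, h3⟩
    · -- wrap crossing happens between q (k-1) and the end
      have hqN : q (k - 1) ≤ L.length - 1 := by have := hqlt (k - 1); omega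
      obtain ⟨r, hr1, hr2, hr, hrs⟩ := exists_small_seg hchain (L.length - 1 - q (k - 1))
        (q (k - 1)) (L.length - 1) (by omega) hNlt le_rfl (fun he => hA he.symm)
      have hne : r ≠ q (k - 1) := by
        intro hh; subst hh; exact hbig (k - 1) (by omega) hrs
      refine final (R ++ [r]) (by simp [hRl]; omega) ?_ ?_
      · rw [List.pairwise_append]
        refine ⟨hRp, List.pairwise_singleton _ _, ?_⟩
        intro a ha b hb
        rcases List.mem_singleton.mp hb with rfl
        have := (hRm a ha).2.1
        omega
      · intro s hs
        rcases List.mem_append.mp hs with hs | hs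
        · obtain ⟨h1, h2, h3⟩ := hRm s hs
          exact ⟨by omega, h3⟩
        · rcases List.mem_singleton.mp hs with rfl
          exact ⟨by omega, hr, hrs⟩
  · -- odd k : the k - 1 internal segments already suffice
    obtain ⟨c, hc⟩ := hkO
    refine final R (by omega) hRp ?_
    intro s hs
    obtain ⟨h1, h2, h3⟩ := hRm s hs
    exact ⟨by omega, h3⟩

/-- The extremal graph has no Hamiltonian cycle encountering the bad sequence in order;
in particular it is not a `k`-ordered Hamiltonian graph. -/
theorem paperGraph_not_kOrdered (n k : ℕ) (hk2 : 2 ≤ k) (hkn : k ≤ n / 2) :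
    (¬ ∃ (x : Fin (n / 2) ⊕ Fin ((n + 1) / 2)) (w : (paperGraph n k).Walk x x),
        w.IsHamiltonianCycle ∧ (badSeq n k hk2 hkn).Sublist w.support) ∧
    ¬ (paperGraph n k).KOrdered k := by
  have hn2 : 0 < n / 2 := by omega
  have key : ¬ ∃ (x : Fin (n / 2) ⊕ Fin ((n + 1) / 2)) (w : (paperGraph n k).Walk x x),
      w.IsHamiltonianCycle ∧ (badSeq n k hk2 hkn).Sublist w.support := by
    rintro ⟨x, w, hw, hsub⟩
    rw [badSeq_eq n k hk2 hkn] at hsub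
    have hsub' : ((List.range k).map (badFun n k hn2)).Sublist w.support := hsub
    have hBlen : ((List.range k).map (badFun n k hn2)).length = k := by simp
    have hLk : k ≤ w.support.length := by
      have := hsub'.length_le
      omega
    obtain ⟨f, hf⟩ := List.sublist_iff_exists_fin_orderEmbedding_get_eq.mp hsub'
    have hne : w.support ≠ [] := w.support_ne_nil
    have hcl : w.support[0]'(by omega) = w.support[w.support.length - 1]'(by omega) := by
      rw [List.getElem_zero, ← List.getLast_eq_getElem hne]
      rw [w.head_support, w.getLast_support]
    refine core hk2 hkn hn2 w.support w.isChain_adj_support hw.isCycle.support_nodup hLk hcl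
      (fun t => (f ⟨min t (k - 1), by rw [hBlen]; omega⟩).val)
      (fun t => (f ⟨min t (k - 1), by rw [hBlen]; omega⟩).isLt) ?_ ?_
    · intro s t hst htk
      have : (⟨min s (k - 1), by rw [hBlen]; omega⟩ : Fin ((List.range k).map (badFun n k hn2)).length) <
          ⟨min t (k - 1), by rw [hBlen]; omega⟩ := by
        rw [Fin.mk_lt_mk]
        omega
      exact f.strictMono this
    · intro t ht
      have h1 := (hf ⟨min t (k - 1), by rw [hBlen]; omega⟩).symm
      simp only [List.get_eq_getElem, List.getElem_map, List.getElem_range] at h1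
      rw [h1]
      congr 1
      omega
  refine ⟨key, fun hKO => key ?_⟩
  have hnd : (badSeq n k hk2 hkn).Nodup := by
    rw [badSeq_eq n k hk2 hkn]
    refine List.Nodup.map_on ?_ List.nodup_range
    intro s hs t ht he
    exact badFun_inj n k hn2 hk2 hkn (List.mem_range.mp hs) (List.mem_range.mp ht) he
  have hlen : (badSeq n k hk2 hkn).length = k := by
    rw [badSeq_eq n k hk2 hkn]; simp
  exact hKO _ hnd hlen
end
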